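/- arXiv:1803.02385 — 6 statements merged into one kernel-verified Lean document; each statement's English description precedes it below -/
import Mathlib

section
/- Let P be a set of n points in the plane in general position, let c be a centerpoint of P, and let p ∈ P with p ≠ c. Then each of the two closed halfplanes determined by the line through c and p contains at least ⌈n/3⌉ + 1 points of P; formally, for every nonzero linear functional f : ℝ² → ℝ with f(c) = f(p), the set {q ∈ P : f(q) ≥ f(c)} has at least ⌈n/3⌉ + 1 elements. -/
/-!
Tilt the line through `c` and `p` slightly about `c`, so that `p` falls strictly on the open
side while every point of `P` strictly below the line stays strictly below the tilted line.
The closed halfplane of the tilted line contains at least `⌈n/3⌉` points of `P` because `c` is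
a centerpoint; all of them lie in the closed halfplane `f ≥ f c`, and none of them is `p`.
-/

/-- A centerpoint of a finite set `P` of points in `ℝ^d`: every closed halfspace
containing `c` contains at least `⌈|P|/(d+1)⌉` points of `P`. -/
def IsCenterpoint {d : ℕ} (P : Finset (EuclideanSpace ℝ (Fin d)))
    (c : EuclideanSpace ℝ (Fin d)) : Prop :=
  ∀ (f : EuclideanSpace ℝ (Fin d) →ₗ[ℝ] ℝ) (a : ℝ), f ≠ 0 → a ≤ f c →
    ⌈(P.card : ℚ) / (d + 1)⌉₊ ≤ (P.filter fun q => a ≤ f q).card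

open Filter Topology

theorem exists_pos_forall_lt_sub_smul_apply {E : Type*} [AddCommGroup E] [Module ℝ E]
    (P : Finset E) (f h : E →ₗ[ℝ] ℝ) (c : E) :
    ∃ ε : ℝ, 0 < ε ∧ ∀ q ∈ P, f q < f c → (f - ε • h) q < (f - ε • h) c := by
  have hlim : ∀ᶠ ε in 𝓝 (0 : ℝ), ∀ q ∈ P, f q < f c → (f - ε • h) q < (f - ε • h) c := by
    refine (eventually_all_finset P).2 fun q _ => ?_
    by_cases hq : f q < f c
    · have hcont : Continuous fun ε : ℝ => (f - ε • h) c - (f - ε • h) q := by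
        simp only [LinearMap.sub_apply, LinearMap.smul_apply, smul_eq_mul]
        fun_prop
      have h0 : 0 < (f - (0 : ℝ) • h) c - (f - (0 : ℝ) • h) q := by simpa using hq
      filter_upwards [(hcont.tendsto 0).eventually (lt_mem_nhds h0)] with ε hε _
      linarith
    · exact Eventually.of_forall fun _ hlt => absurd hlt hq
  exact ((hlim.filter_mono nhdsWithin_le_nhds).and
    (eventually_mem_nhdsWithin (a := 0) (s := Set.Ioi 0))).exists.imp
    fun _ ⟨hε, hpos⟩ => ⟨hpos, hε⟩

theorem IsCenterpoint.ceil_add_one_le_card_filter_le {d : ℕ}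
    {P : Finset (EuclideanSpace ℝ (Fin d))} {c p : EuclideanSpace ℝ (Fin d)}
    (hc : IsCenterpoint P c) (hp : p ∈ P) (hpc : p ≠ c)
    (f : EuclideanSpace ℝ (Fin d) →ₗ[ℝ] ℝ) (hfc : f c = f p) :
    ⌈(P.card : ℚ) / (d + 1)⌉₊ + 1 ≤ (P.filter fun q => f c ≤ f q).card := by
  classical
  let h : EuclideanSpace ℝ (Fin d) →ₗ[ℝ] ℝ := (innerSL ℝ (p - c)).toLinearMap
  have hhpc : h c < h p := by
    have hdiff : h p - h c = ‖p - c‖ ^ 2 := by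
      simp only [h, ContinuousLinearMap.coe_coe, innerSL_apply_apply]
      rw [← inner_sub_right, real_inner_self_eq_norm_sq]
    have hnorm : 0 < ‖p - c‖ := norm_pos_iff.2 (sub_ne_zero.2 hpc)
    nlinarith
  obtain ⟨ε, hε, htilt⟩ := exists_pos_forall_lt_sub_smul_apply P f h c
  set g := f - ε • h
  have hgp : g p < g c := by
    simp only [g, LinearMap.sub_apply, LinearMap.smul_apply, smul_eq_mul, hfc]
    nlinarith
  have hg : g ≠ 0 := fun h0 => by simp [h0] at hgp
  set S := P.filter fun q => g c ≤ g q
  have hsub : insert p S ⊆ P.filter fun q => f c ≤ f q := by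
    refine Finset.insert_subset (Finset.mem_filter.2 ⟨hp, hfc.le⟩) fun q hq => ?_
    obtain ⟨hqP, hgq⟩ := Finset.mem_filter.1 hq
    exact Finset.mem_filter.2 ⟨hqP, not_lt.1 fun hfq => (htilt q hqP hfq).not_ge hgq⟩
  have hpS : p ∉ S := fun hpS => (Finset.mem_filter.1 hpS).2.not_gt hgp
  calc ⌈(P.card : ℚ) / (d + 1)⌉₊ + 1 ≤ S.card + 1 := Nat.add_le_add_right (hc g (g c) hg le_rfl) 1
    _ = (insert p S).card := (Finset.card_insert_of_notMem hpS).symm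
    _ ≤ _ := Finset.card_le_card hsub

theorem centerpoint_line_halfplane_general
    (P : Finset (EuclideanSpace ℝ (Fin 2))) (n : ℕ) (hn : P.card = n)
    (c : EuclideanSpace ℝ (Fin 2)) (hc : IsCenterpoint P c)
    (p : EuclideanSpace ℝ (Fin 2)) (hp : p ∈ P) (hpc : p ≠ c) :
    ∀ f : EuclideanSpace ℝ (Fin 2) →ₗ[ℝ] ℝ, f ≠ 0 → f c = f p →
      ⌈(n : ℚ) / 3⌉₊ + 1 ≤ (P.filter fun q => f c ≤ f q).card := by
  intro f _ hfc
  simpa [hn, show (2 : ℚ) + 1 = 3 by norm_num] using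
    hc.ceil_add_one_le_card_filter_le hp hpc f hfc

/-- for a centerpoint `c` of `n` points in general position in the plane
and a point `p ∈ P` with `p ≠ c`, each closed halfplane bounded by the line through
`c` and `p` contains at least `⌈n/3⌉ + 1` points of `P`. -/
theorem centerpoint_line_halfplane
    (P : Finset (EuclideanSpace ℝ (Fin 2))) (n : ℕ) (hn : P.card = n)
    (hgp : ∀ p ∈ P, ∀ q ∈ P, ∀ r ∈ P, p ≠ q → p ≠ r → q ≠ r →
      AffineIndependent ℝ ![p, q, r])
    (c : EuclideanSpace ℝ (Fin 2)) (hc : IsCenterpoint P c)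
    (p : EuclideanSpace ℝ (Fin 2)) (hp : p ∈ P) (hpc : p ≠ c) :
    ∀ f : EuclideanSpace ℝ (Fin 2) →ₗ[ℝ] ℝ, f ≠ 0 → f c = f p →
      ⌈(n : ℚ) / 3⌉₊ + 1 ≤ (P.filter fun q => f c ≤ f q).card :=
  centerpoint_line_halfplane_general P n hn c hc p hp hpc
end

section
/- Let P be a set of n ≥ 6 points in the plane in general position, and let C be the center of P. Then C has dimension either 0 or 2. Moreover, if C is 0-dimensional, then C = {p} for a single point p that belongs to P, and n = 3k + 1 for some integer k ≥ 2. -/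
/-- The dimension of a subset of `ℝ^d`: the rank of the direction of its affine span. -/
noncomputable def setDim {d : ℕ} (S : Set (EuclideanSpace ℝ (Fin d))) : ℕ :=
  Module.finrank ℝ (affineSpan ℝ S).direction

/-!
With `k = ⌈n/3⌉`, a point `c` is a centerpoint iff for every unit vector `u`, `⟪u, c⟫` is at most
the `k`-th largest of the values `⟪u, q⟫`, `q ∈ P`; call `u` tight at `c` when equality holds.
By compactness of the circle and continuity of the `k`-th largest value, a centerpoint that
cannot move in direction `v` has a tight direction `u` with `⟪u, v⟫ ≥ 0`. In general position,
`u` and `-u` are never both tight at the same point: otherwise at least `n - 2(k - 1) ≥ 3` points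
of `P` would lie on one line.

If the center contains `a ≠ b` but nothing off the line `ab`, the midpoint of `ab` cannot move
in either normal direction `±w`, so it has tight directions `u₁`, `u₂` with
`⟪u₁, w⟫ ≥ 0 ≥ ⟪u₂, w⟫`. Both are orthogonal to `b - a`, hence equal (they cannot be opposite),
hence orthogonal to `w` as well, which is impossible in the plane. So the center is a point or
has dimension `2`. If it is a single point `p`, then `p` cannot move in any direction, so
(Hahn–Banach) `0` is in the convex hull of the tight directions, and by Carathéodory it is a
positive combination of at most three of them. Every `q ≠ p` in `P` lies strictly beyond `p`
in one of these directions, and each of them has fewer than `k` points of `P` strictly beyond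
`p`; hence `n - 1 ≤ 3(k - 1) < n`, which forces `p ∈ P` and `n = 3(k - 1) + 1`.
-/

open Finset Module RealInnerProductSpace

section KthLargest

variable {α : Type*}

-- Junk value `0` unless `0 < k ≤ #s`.
noncomputable def kthLargest (s : Finset α) (k : ℕ) (f : α → ℝ) : ℝ :=
  if hs : (s.powersetCard k).Nonempty then
    (s.powersetCard k).sup' hs fun t => if ht : t.Nonempty then t.inf' ht f else 0
  else 0

variable {s : Finset α} {k : ℕ} {f : α → ℝ}

theorem le_kthLargest_iff (hk : 0 < k) (hks : k ≤ #s) {a : ℝ} :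
    a ≤ kthLargest s k f ↔ k ≤ #{x ∈ s | a ≤ f x} := by
  have hs : (s.powersetCard k).Nonempty := powersetCard_nonempty.2 hks
  have ht {t} (h : t ∈ s.powersetCard k) : t.Nonempty :=
    card_pos.1 ((mem_powersetCard.1 h).2 ▸ hk)
  rw [kthLargest, dif_pos hs, le_sup'_iff]
  constructor
  · rintro ⟨t, htk, hat⟩
    rw [dif_pos (ht htk), le_inf'_iff] at hat
    obtain ⟨hts, rfl⟩ := mem_powersetCard.1 htk
    exact card_le_card fun x hx => mem_filter.2 ⟨hts hx, hat x hx⟩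
  · intro h
    obtain ⟨t, hts, rfl⟩ := exists_subset_card_eq h
    have htk : t ∈ s.powersetCard #t := mem_powersetCard.2 ⟨hts.trans (filter_subset _ _), rfl⟩
    refine ⟨t, htk, ?_⟩
    rw [dif_pos (ht htk), le_inf'_iff]
    exact fun x hx => (mem_filter.1 (hts hx)).2

theorem lt_kthLargest_iff (hk : 0 < k) (hks : k ≤ #s) {a : ℝ} :
    a < kthLargest s k f ↔ k ≤ #{x ∈ s | a < f x} := by
  constructor
  · intro h
    refine ((le_kthLargest_iff (f := f) hk hks).1 le_rfl).trans (card_le_card ?_)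
    exact monotone_filter_right s fun x _ hx => h.trans_le hx
  · intro h
    obtain ⟨t, hts, rfl⟩ := exists_subset_card_eq h
    have ht : t.Nonempty := card_pos.1 hk
    calc a < t.inf' ht f := (lt_inf'_iff ht).2 fun x hx => (mem_filter.1 (hts hx)).2
      _ ≤ kthLargest s #t f := (le_kthLargest_iff hk hks).2 <| card_le_card fun x hx =>
          mem_filter.2 ⟨(mem_filter.1 (hts hx)).1, inf'_le f hx⟩

theorem continuous_kthLargest {X : Type*} [TopologicalSpace X] (s : Finset α) (k : ℕ)
    {g : X → α → ℝ} (hg : ∀ a, Continuous fun x => g x a) :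
    Continuous fun x => kthLargest s k (g x) := by
  unfold kthLargest
  split_ifs with hs
  · refine Continuous.finset_sup'_apply hs fun t _ => ?_
    split_ifs with ht
    · exact Continuous.finset_inf'_apply ht fun a _ => hg a
    · exact continuous_const
  · exact continuous_const

end KthLargest

theorem AffineIndependent.card_le_finrank_add_one {ι E : Type*} [Fintype ι] [AddCommGroup E]
    [Module ℝ E] [FiniteDimensional ℝ E] {p : ι → E} (hp : AffineIndependent ℝ p) :
    Fintype.card ι ≤ finrank ℝ E + 1 :=
  hp.card_le_finrank_succ.trans (Nat.add_le_add_right (Submodule.finrank_le _) 1)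

theorem IsCompact.convexHull_of_finiteDimensional {E : Type*} [NormedAddCommGroup E]
    [NormedSpace ℝ E] [FiniteDimensional ℝ E] {T : Set E} (hT : IsCompact T) :
    IsCompact (convexHull ℝ T) := by
  rcases T.eq_empty_or_nonempty with rfl | ⟨t₀, ht₀⟩
  · simp
  let m := finrank ℝ E + 1
  -- Carathéodory: every point of the hull is a convex combination of `m` points of `T`.
  have hhull : convexHull ℝ T = (fun p : (Fin m → ℝ) × (Fin m → E) => ∑ i, p.1 i • p.2 i) ''
      (stdSimplex ℝ (Fin m) ×ˢ Set.univ.pi fun _ => T) := by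
    refine subset_antisymm (fun x hx => ?_) ?_
    · obtain ⟨ι, _, z, w, hzT, hz, hw0, hw1, rfl⟩ := eq_pos_convex_span_of_mem_convexHull hx
      obtain ⟨e⟩ : Nonempty (ι ↪ Fin m) :=
        Function.Embedding.nonempty_of_card_le (by simpa using hz.card_le_finrank_add_one)
      refine ⟨(Function.extend e w fun _ => 0, Function.extend e z fun _ => t₀),
        ⟨⟨fun j => ?_, ?_⟩, fun j _ => ?_⟩, ?_⟩
      · by_cases hj : j ∈ Set.range e
        · obtain ⟨i, rfl⟩ := hj
          simpa only [e.injective.extend_apply] using (hw0 i).le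
        · simp only [Function.extend_apply' _ _ _ hj, le_rfl]
      · rw [← hw1]
        refine (Fintype.sum_of_injective e e.injective _ _ (fun j hj => ?_) fun i => ?_).symm
        · simp only [Function.extend_apply' _ _ _ hj]
        · simp only [e.injective.extend_apply]
      · by_cases hj : j ∈ Set.range e
        · obtain ⟨i, rfl⟩ := hj
          simpa only [e.injective.extend_apply] using hzT (Set.mem_range_self i)
        · simpa only [Function.extend_apply' _ _ _ hj] using ht₀
      · refine (Fintype.sum_of_injective e e.injective _ _ (fun j hj => ?_) fun i => ?_).symm
        · simp only [Function.extend_apply' _ _ _ hj, zero_smul]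
        · simp only [e.injective.extend_apply]
    · rintro _ ⟨⟨w, z⟩, ⟨hw, hz⟩, rfl⟩
      exact (convex_convexHull ℝ T).sum_mem (fun i _ => hw.1 i) hw.2
        fun i _ => subset_convexHull ℝ T (hz i trivial)
  rw [hhull]
  exact ((isCompact_stdSimplex _ _).prod (isCompact_univ_pi fun _ => hT)).image (by fun_prop)

theorem zero_mem_convexHull_of_forall_exists_inner_nonneg {E : Type*} [NormedAddCommGroup E]
    [InnerProductSpace ℝ E] [FiniteDimensional ℝ E] [Nontrivial E] {T : Set E} (hT : IsCompact T)
    (h : ∀ v ≠ 0, ∃ u ∈ T, 0 ≤ ⟪u, v⟫) : (0 : E) ∈ convexHull ℝ T := by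
  by_contra h0
  obtain ⟨f, s, hfs, hs0⟩ := geometric_hahn_banach_closed_point (convex_convexHull ℝ T)
    hT.convexHull_of_finiteDimensional.isClosed h0
  rw [map_zero] at hs0
  set v := (InnerProductSpace.toDual ℝ E).symm f
  have hneg (u) (hu : u ∈ T) : ⟪u, v⟫ < 0 := by
    rw [real_inner_comm, InnerProductSpace.toDual_symm_apply]
    exact (hfs u (subset_convexHull ℝ T hu)).trans hs0
  have hv : v ≠ 0 := by
    obtain ⟨w, hw⟩ := exists_ne (0 : E)
    obtain ⟨u, hu, -⟩ := h w hw
    rintro hv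
    simpa [hv] using hneg u hu
  obtain ⟨u, hu, hu0⟩ := h v hv
  exact (hneg u hu).not_ge hu0

theorem Finset.exists_mem_forall_mem_of_sum_card_sdiff_lt {α : Type*} [DecidableEq α]
    {s : Finset α} {I : Finset (Finset α)} (h : ∑ t ∈ I, #(s \ t) < #s) :
    ∃ x ∈ s, ∀ t ∈ I, x ∈ t := by
  by_contra! hx
  refine h.not_ge ((card_le_card fun x hxs => ?_).trans card_biUnion_le)
  obtain ⟨t, ht, hxt⟩ := hx x hxs
  exact mem_biUnion.2 ⟨t, ht, mem_sdiff.2 ⟨hxs, hxt⟩⟩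

section Centerpoint

variable {d : ℕ} {P : Finset (EuclideanSpace ℝ (Fin d))}

variable (P) in
def centerpointDepth : ℕ := ⌈(#P : ℚ) / (d + 1)⌉₊

theorem centerpointDepth_pos (hP : P.Nonempty) : 0 < centerpointDepth P :=
  Nat.ceil_pos.2 (by have := hP.card_pos; positivity)

theorem mul_centerpointDepth_sub_one_lt (hP : P.Nonempty) :
    (d + 1) * (centerpointDepth P - 1) < #P := by
  have hk := centerpointDepth_pos hP
  have hlt : (centerpointDepth P : ℚ) < #P / (d + 1) + 1 := Nat.ceil_lt_add_one (by positivity)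
  rw [← sub_lt_iff_lt_add, lt_div_iff₀ (by positivity)] at hlt
  have : (((d + 1) * (centerpointDepth P - 1) : ℕ) : ℚ) < #P := by
    push_cast [Nat.cast_sub hk]
    linarith
  exact_mod_cast this

theorem centerpointDepth_le_card (hP : P.Nonempty) : centerpointDepth P ≤ #P := by
  have := mul_centerpointDepth_sub_one_lt hP
  have := Nat.le_mul_of_pos_left (centerpointDepth P - 1) (by omega : 0 < d + 1)
  omega

variable (P) in
theorem exists_isCenterpoint : ∃ c, IsCenterpoint P c := by
  rcases P.eq_empty_or_nonempty with rfl | hP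
  · exact ⟨0, fun _ _ _ _ => by simp⟩
  have hkP := mul_centerpointDepth_sub_one_lt hP
  have hkn := centerpointDepth_le_card hP
  -- Helly: any `d + 1` of the `(#P - k + 1)`-subsets of `P` share a point of `P`, since each one
  -- misses only `k - 1` points; so the hulls of all of them have a common point `c`.
  have hinter : ∀ I ⊆ P.powersetCard (#P - centerpointDepth P + 1),
      #I ≤ finrank ℝ (EuclideanSpace ℝ (Fin d)) + 1 →
        (⋂ S ∈ I, convexHull ℝ (S : Set (EuclideanSpace ℝ (Fin d)))).Nonempty := by
    intro I hI hIcard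
    rw [finrank_euclideanSpace_fin] at hIcard
    obtain ⟨x, -, hx⟩ := exists_mem_forall_mem_of_sum_card_sdiff_lt (s := P) (I := I) <|
      calc ∑ S ∈ I, #(P \ S) = ∑ S ∈ I, (centerpointDepth P - 1) := sum_congr rfl fun S hS => by
              obtain ⟨hSP, hSc⟩ := mem_powersetCard.1 (hI hS)
              rw [card_sdiff_of_subset hSP, hSc]
              omega
        _ ≤ (d + 1) * (centerpointDepth P - 1) := by
              rw [sum_const, smul_eq_mul]
              exact Nat.mul_le_mul_right _ hIcard
        _ < #P := hkP
    exact ⟨x, Set.mem_iInter₂.2 fun S hS => subset_convexHull ℝ _ (hx S hS)⟩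
  obtain ⟨c, hc⟩ := Convex.helly_theorem' (fun S _ => convex_convexHull ℝ _) hinter
  refine ⟨c, fun f a _ hac => ?_⟩
  by_contra! hlt
  have hcompl : #P - centerpointDepth P + 1 ≤ #{q ∈ P | ¬a ≤ f q} := by
    have := card_filter_add_card_filter_not (s := P) (fun q => a ≤ f q)
    change #{q ∈ P | a ≤ f q} < centerpointDepth P at hlt
    omega
  obtain ⟨S, hS, hSc⟩ := exists_subset_card_eq hcompl
  have hcS := Set.mem_iInter₂.1 hc S (mem_powersetCard.2 ⟨hS.trans (filter_subset _ _), hSc⟩)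
  have hSa : convexHull ℝ (S : Set _) ⊆ {x | f x < a} :=
    convexHull_min (fun q hq => not_le.1 (mem_filter.1 (hS hq)).2)
      (convex_halfSpace_lt f.isLinear a)
  exact (hSa hcS).not_ge hac

theorem convex_setOf_isCenterpoint : Convex ℝ {c | IsCenterpoint P c} := by
  intro c₁ h₁ c₂ h₂ α β hα hβ hαβ f a hf hac
  rw [map_add, map_smul, map_smul, smul_eq_mul, smul_eq_mul] at hac
  rcases le_total (f c₁) (f c₂) with h | h
  · exact h₂ f a hf (by linear_combination hac + mul_le_mul_of_nonneg_left h hα + f c₂ * hαβ)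
  · exact h₁ f a hf (by linear_combination hac + mul_le_mul_of_nonneg_left h hβ + f c₁ * hαβ)

variable (P) in
noncomputable def centerLevel (u : EuclideanSpace ℝ (Fin d)) : ℝ :=
  kthLargest P (centerpointDepth P) fun q => ⟪u, q⟫

theorem continuous_centerLevel : Continuous (centerLevel P) :=
  continuous_kthLargest _ _ fun _ => by fun_prop

theorem isCenterpoint_iff (hP : P.Nonempty) {x : EuclideanSpace ℝ (Fin d)} :
    IsCenterpoint P x ↔ ∀ u, ‖u‖ = 1 → ⟪u, x⟫ ≤ centerLevel P u := by
  simp_rw [centerLevel, le_kthLargest_iff (centerpointDepth_pos hP) (centerpointDepth_le_card hP)]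
  constructor
  · intro h u hu
    refine h (innerₛₗ ℝ (E := EuclideanSpace ℝ (Fin d)) u) _ (fun h0 => ?_) le_rfl
    simpa [hu] using LinearMap.congr_fun h0 u
  · intro h f a hf hax
    obtain ⟨v, hv⟩ : ∃ v, ∀ y, f y = ⟪v, y⟫ :=
      ⟨(InnerProductSpace.toDual ℝ _).symm f.toContinuousLinearMap,
        fun y => by rw [InnerProductSpace.toDual_symm_apply]; rfl⟩
    have hv0 : v ≠ 0 := by
      rintro rfl
      exact hf (LinearMap.ext fun y => by simp [hv])
    refine (h (‖v‖⁻¹ • v) (by simp [norm_smul, hv0])).trans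
      (card_le_card (monotone_filter_right _ fun q _ hq => ?_))
    simp only [real_inner_smul_left, ← hv] at hq
    exact hax.trans (le_of_mul_le_mul_left hq (inv_pos.2 (norm_pos_iff.2 hv0)))

end Centerpoint

section TightDirection

variable {d : ℕ} {P : Finset (EuclideanSpace ℝ (Fin d))} {c u v : EuclideanSpace ℝ (Fin d)}

-- The constraint of direction `u` in `isCenterpoint_iff` is active at `c`.
variable (P) in
def IsTightDirection (c u : EuclideanSpace ℝ (Fin d)) : Prop :=
  ‖u‖ = 1 ∧ centerLevel P u = ⟪u, c⟫

theorem IsTightDirection.card_filter_lt (hP : P.Nonempty) (hu : IsTightDirection P c u) :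
    #{q ∈ P | ⟪u, c⟫ < ⟪u, q⟫} < centerpointDepth P := by
  rw [← not_le, ← lt_kthLargest_iff (centerpointDepth_pos hP) (centerpointDepth_le_card hP),
    ← centerLevel, hu.2]
  exact lt_irrefl _

theorem isCompact_setOf_isTightDirection : IsCompact {u | IsTightDirection P c u} :=
  (isCompact_sphere 0 1).of_isClosed_subset
    ((isClosed_eq continuous_norm continuous_const).inter
      (isClosed_eq continuous_centerLevel (by fun_prop)))
    fun _ hu => mem_sphere_zero_iff_norm.2 hu.1

theorem exists_isTightDirection_inner_nonneg (hP : P.Nonempty) (hc : IsCenterpoint P c)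
    (hv : ∀ ε : ℝ, 0 < ε → ¬IsCenterpoint P (c + ε • v)) :
    ∃ u, IsTightDirection P c u ∧ 0 ≤ ⟪u, v⟫ := by
  by_contra! htight
  -- Otherwise the slack `centerLevel P u - ⟪u, c⟫` is at least some `δ > 0` on the compact set
  -- of unit vectors `u` with `⟪u, v⟫ ≥ 0`, and `c` can move by `δ / (‖v‖ + 1)` along `v`.
  rw [isCenterpoint_iff hP] at hc
  let K := Metric.sphere (0 : EuclideanSpace ℝ (Fin d)) 1 ∩ {u | 0 ≤ ⟪u, v⟫}
  have hK : IsCompact K :=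
    (isCompact_sphere 0 1).inter_right (isClosed_le (by fun_prop) (by fun_prop))
  obtain ⟨δ, hδ, hδK⟩ := hK.exists_forall_le' (f := fun u => centerLevel P u - ⟪u, c⟫)
    (continuous_centerLevel.sub (by fun_prop)).continuousOn fun u ⟨hu, huv⟩ => by
      have hu := mem_sphere_zero_iff_norm.1 hu
      refine sub_pos.2 ((hc u hu).lt_of_ne fun h => ?_)
      exact (htight u ⟨hu, h.symm⟩).not_ge huv
  refine hv (δ / (‖v‖ + 1)) (by positivity) ((isCenterpoint_iff hP).2 fun u hu => ?_)
  rw [inner_add_right, real_inner_smul_right]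
  rcases lt_or_ge ⟪u, v⟫ 0 with huv | huv
  · nlinarith [hc u hu, div_pos hδ (by positivity : 0 < ‖v‖ + 1)]
  · have h1 := hδK u ⟨mem_sphere_zero_iff_norm.2 hu, huv⟩
    have h2 : ⟪u, v⟫ ≤ ‖v‖ := by simpa [hu] using real_inner_le_norm u v
    have h3 : δ / (‖v‖ + 1) * ⟪u, v⟫ ≤ δ := by
      rw [div_mul_eq_mul_div, div_le_iff₀ (by positivity)]
      nlinarith
    linarith

theorem IsTightDirection.inner_sub_eq_zero {a b : EuclideanSpace ℝ (Fin d)} (hP : P.Nonempty)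
    (ha : IsCenterpoint P a) (hb : IsCenterpoint P b)
    (hu : IsTightDirection P (midpoint ℝ a b) u) : ⟪u, b - a⟫ = 0 := by
  have hua := (isCenterpoint_iff hP).1 ha u hu.1
  have hub := (isCenterpoint_iff hP).1 hb u hu.1
  rw [hu.2, midpoint_eq_smul_add, inner_smul_right, inner_add_right] at hua hub
  rw [inner_sub_right]
  norm_num at hua hub
  linarith

theorem zero_mem_convexHull_setOf_isTightDirection [NeZero d] {p : EuclideanSpace ℝ (Fin d)}
    (hP : P.Nonempty) (hC : {c | IsCenterpoint P c} = {p}) :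
    (0 : EuclideanSpace ℝ (Fin d)) ∈ convexHull ℝ {u | IsTightDirection P p u} := by
  have hp : IsCenterpoint P p := (Set.ext_iff.1 hC p).2 rfl
  refine zero_mem_convexHull_of_forall_exists_inner_nonneg isCompact_setOf_isTightDirection
    fun v hv => exists_isTightDirection_inner_nonneg hP hp fun ε hε hpε => ?_
  have : p + ε • v = p := (Set.ext_iff.1 hC _).1 hpε
  exact hv ((smul_eq_zero.1 (add_eq_left.1 this)).resolve_left hε.ne')

end TightDirection

section PlaneGeometry

variable {E : Type*} [NormedAddCommGroup E] [InnerProductSpace ℝ E]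

theorem finrank_orthogonal_span_singleton_eq_one (hE : finrank ℝ E = 2) {e : E} (he : e ≠ 0) :
    finrank ℝ (ℝ ∙ e)ᗮ = 1 :=
  have : Fact (finrank ℝ E = 1 + 1) := ⟨hE⟩
  Submodule.finrank_orthogonal_span_singleton he

theorem exists_norm_eq_one_inner_eq_zero (hE : finrank ℝ E = 2) {e : E} (he : e ≠ 0) :
    ∃ w : E, ‖w‖ = 1 ∧ ⟪w, e⟫ = 0 := by
  have : (ℝ ∙ e)ᗮ ≠ ⊥ := fun h => by
    have := finrank_orthogonal_span_singleton_eq_one hE he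
    rw [h, finrank_bot] at this
    exact zero_ne_one this
  obtain ⟨w, hw, hw0⟩ := Submodule.exists_mem_ne_zero_of_ne_bot this
  refine ⟨‖w‖⁻¹ • w, by simp [norm_smul, hw0], ?_⟩
  rw [real_inner_smul_left, Submodule.mem_orthogonal_singleton_iff_inner_left.1 hw, mul_zero]

theorem eq_or_eq_neg_of_inner_eq_zero (hE : finrank ℝ E = 2) {e u w : E} (he : e ≠ 0)
    (hu : ‖u‖ = 1) (hw : ‖w‖ = 1) (hue : ⟪u, e⟫ = 0) (hwe : ⟪w, e⟫ = 0) : u = w ∨ u = -w := by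
  have hw0 : w ≠ 0 := by rintro rfl; simp at hw
  have hmem {x : E} (hx : ⟪x, e⟫ = 0) : x ∈ (ℝ ∙ e)ᗮ :=
    Submodule.mem_orthogonal_singleton_iff_inner_left.2 hx
  obtain ⟨c, hc⟩ := (finrank_eq_one_iff_of_nonzero' (⟨w, hmem hwe⟩ : (ℝ ∙ e)ᗮ)
    (by simpa using hw0)).1 (finrank_orthogonal_span_singleton_eq_one hE he) ⟨u, hmem hue⟩
  have hc : c • w = u := congrArg Subtype.val hc
  have hc1 : |c| = 1 := by simpa [← hc, norm_smul, hw] using hu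
  rcases abs_eq zero_le_one |>.1 hc1 with rfl | rfl
  · exact .inl (by simpa using hc.symm)
  · exact .inr (by simpa using hc.symm)

theorem collinear_setOf_inner_eq (hE : finrank ℝ E = 2) {w : E} (hw : w ≠ 0) (t : ℝ) :
    Collinear ℝ {x : E | ⟪w, x⟫ = t} := by
  have hle : vectorSpan ℝ {x : E | ⟪w, x⟫ = t} ≤ (ℝ ∙ w)ᗮ := by
    rw [vectorSpan_def, Submodule.span_le]
    rintro _ ⟨p, hp, q, hq, rfl⟩
    rw [SetLike.mem_coe, Submodule.mem_orthogonal_singleton_iff_inner_right]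
    change ⟪w, p - q⟫ = 0
    rw [inner_sub_right, hp, hq, sub_self]
  have : FiniteDimensional ℝ E := .of_finrank_pos (by omega)
  rw [collinear_iff_finrank_le_one]
  exact (Submodule.finrank_mono hle).trans (finrank_orthogonal_span_singleton_eq_one hE hw).le

theorem add_notMem_line_of_inner_sub_eq_zero {a b m v : E} (hm : m ∈ line[ℝ, a, b])
    (hv : v ≠ 0) (hvab : ⟪v, b - a⟫ = 0) : m + v ∉ line[ℝ, a, b] := by
  rw [add_comm, ← vadd_eq_add, AffineSubspace.vadd_mem_iff_mem_direction v hm,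
    direction_affineSpan, vectorSpan_pair, Submodule.mem_span_singleton]
  rintro ⟨r, rfl⟩
  refine hv (inner_self_eq_zero (𝕜 := ℝ).1 ?_)
  simp only [vsub_eq_sub, ← neg_sub b a, smul_neg, inner_neg_left, inner_neg_right,
    real_inner_smul_left, real_inner_smul_right] at hvab ⊢
  linear_combination -r * hvab

end PlaneGeometry

section GeneralPosition

variable {E : Type*} [AddCommGroup E] [Module ℝ E]

def InGeneralPosition (P : Finset E) : Prop :=
  ∀ p ∈ P, ∀ q ∈ P, ∀ r ∈ P, p ≠ q → p ≠ r → q ≠ r → AffineIndependent ℝ ![p, q, r]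

theorem InGeneralPosition.card_le_two_of_collinear {P S : Finset E} (hP : InGeneralPosition P)
    (hSP : S ⊆ P) (hS : Collinear ℝ (S : Set E)) : #S ≤ 2 := by
  by_contra! h
  obtain ⟨a, ha, b, hb, c, hc, hab, hac, hbc⟩ := two_lt_card.1 h
  refine affineIndependent_iff_not_collinear_set.1
    (hP a (hSP ha) b (hSP hb) c (hSP hc) hab hac hbc) (hS.subset ?_)
  simp [Set.insert_subset_iff, ha, hb, hc]

end GeneralPosition

theorem setDim_le {d : ℕ} (S : Set (EuclideanSpace ℝ (Fin d))) : setDim S ≤ d :=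
  (Submodule.finrank_le _).trans_eq finrank_euclideanSpace_fin

theorem setDim_le_one_iff_collinear {d : ℕ} {S : Set (EuclideanSpace ℝ (Fin d))} :
    setDim S ≤ 1 ↔ Collinear ℝ S := by
  rw [setDim, direction_affineSpan, collinear_iff_finrank_le_one]

theorem setDim_singleton {d : ℕ} (p : EuclideanSpace ℝ (Fin d)) : setDim {p} = 0 := by
  simp [setDim, direction_affineSpan]

local notation "ℝ²" => EuclideanSpace ℝ (Fin 2)

section PlaneCenter

variable {P : Finset ℝ²} {a b c p u w : ℝ²}

theorem not_isTightDirection_neg (hgp : InGeneralPosition P) (hn : 2 * centerpointDepth P < #P)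
    (hu : IsTightDirection P c u) : ¬IsTightDirection P c (-u) := by
  intro hnu
  have hP : P.Nonempty := card_pos.1 (by omega)
  have hu0 : u ≠ 0 := by rintro rfl; simpa using hu.1
  have habove := hu.card_filter_lt hP
  have hbelow := hnu.card_filter_lt hP
  simp only [inner_neg_left, neg_lt_neg_iff] at hbelow
  have hon := hgp.card_le_two_of_collinear (filter_subset (fun q => ⟪u, q⟫ = ⟪u, c⟫) P)
    ((collinear_setOf_inner_eq finrank_euclideanSpace_fin hu0 ⟪u, c⟫).subset
      fun q hq => (mem_filter.1 hq).2)
  have hsplit : #P ≤ #{q ∈ P | ⟪u, q⟫ < ⟪u, c⟫} + #{q ∈ P | ⟪u, q⟫ = ⟪u, c⟫} +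
      #{q ∈ P | ⟪u, c⟫ < ⟪u, q⟫} := by
    refine (card_le_card fun q hq => ?_).trans ((card_union_le _ _).trans
      (Nat.add_le_add_right (card_union_le _ _) _))
    rcases lt_trichotomy ⟪u, q⟫ ⟪u, c⟫ with h | h | h <;> simp [hq, h]
  omega

theorem IsTightDirection.eq_of_inner_eq_zero (hgp : InGeneralPosition P)
    (hn : 2 * centerpointDepth P < #P) {e : ℝ²} (hu : IsTightDirection P c u)
    (hw : IsTightDirection P c w) (he : e ≠ 0) (hue : ⟪u, e⟫ = 0) (hwe : ⟪w, e⟫ = 0) : u = w :=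
  (eq_or_eq_neg_of_inner_eq_zero finrank_euclideanSpace_fin he hu.1 hw.1 hue hwe).resolve_right
    fun h => not_isTightDirection_neg hgp hn hw (h ▸ hu)

theorem exists_isCenterpoint_notMem_line (hgp : InGeneralPosition P)
    (hn : 2 * centerpointDepth P < #P) (ha : IsCenterpoint P a) (hb : IsCenterpoint P b)
    (hab : a ≠ b) : ∃ c, IsCenterpoint P c ∧ c ∉ line[ℝ, a, b] := by
  have hP : P.Nonempty := card_pos.1 (by omega)
  have he : b - a ≠ 0 := sub_ne_zero.2 hab.symm
  obtain ⟨w, hw, hwe⟩ := exists_norm_eq_one_inner_eq_zero finrank_euclideanSpace_fin he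
  have hm : IsCenterpoint P (midpoint ℝ a b) :=
    convex_setOf_isCenterpoint.segment_subset ha hb (midpoint_mem_segment a b)
  by_contra! hline
  have hblocked (σ : ℝ²) (hσ : σ ≠ 0) (hσe : ⟪σ, b - a⟫ = 0) :
      ∃ u, IsTightDirection P (midpoint ℝ a b) u ∧ 0 ≤ ⟪u, σ⟫ :=
    exists_isTightDirection_inner_nonneg hP hm fun ε hε hmε =>
      add_notMem_line_of_inner_sub_eq_zero (AffineMap.lineMap_mem_affineSpan_pair _ _ _)
        (smul_ne_zero hε.ne' hσ) (by rw [real_inner_smul_left, hσe, mul_zero]) (hline _ hmε)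
  have hw0 : w ≠ 0 := by rintro rfl; simp at hw
  obtain ⟨u₁, hu₁, hu₁w⟩ := hblocked w hw0 hwe
  obtain ⟨u₂, hu₂, hu₂w⟩ :=
    hblocked (-w) (neg_ne_zero.2 hw0) (by rw [inner_neg_left, hwe, neg_zero])
  obtain rfl := hu₁.eq_of_inner_eq_zero hgp hn hu₂ he (hu₁.inner_sub_eq_zero hP ha hb)
    (hu₂.inner_sub_eq_zero hP ha hb)
  rw [inner_neg_right, neg_nonneg] at hu₂w
  rcases eq_or_eq_neg_of_inner_eq_zero finrank_euclideanSpace_fin he hu₁.1 hw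
    (hu₁.inner_sub_eq_zero hP ha hb) hwe with rfl | rfl
  · norm_num [hw] at hu₂w
  · norm_num [hw] at hu₁w

theorem not_collinear_setOf_isCenterpoint (hgp : InGeneralPosition P)
    (hn : 2 * centerpointDepth P < #P) (hC : ¬{c | IsCenterpoint P c}.Subsingleton) :
    ¬Collinear ℝ {c | IsCenterpoint P c} := by
  obtain ⟨a, ha, b, hb, hab⟩ := Set.not_subsingleton_iff.1 hC
  obtain ⟨c, hc, hcab⟩ := exists_isCenterpoint_notMem_line hgp hn ha hb hab
  exact fun hcol => hcab (hcol.mem_affineSpan_of_mem_of_ne ha hb hc hab)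

theorem exists_inner_lt_of_sum_smul_eq_zero (hgp : InGeneralPosition P)
    (hn : 2 * centerpointDepth P < #P) {ι : Type*} [Fintype ι] {z : ι → ℝ²} {μ : ι → ℝ}
    (hz : ∀ i, IsTightDirection P p (z i)) (hμ : ∀ i, 0 < μ i) (hμ1 : ∑ i, μ i = 1)
    (hμz : ∑ i, μ i • z i = 0) {q : ℝ²} (hq : q ≠ p) : ∃ i, ⟪z i, p⟫ < ⟪z i, q⟫ := by
  by_contra! hle
  have hperp (i) : ⟪z i, q - p⟫ = 0 := by
    have hsum : ∑ i, μ i * ⟪z i, q - p⟫ = 0 := by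
      simp_rw [← real_inner_smul_left, ← sum_inner, hμz, inner_zero_left]
    have hnonpos (i) (_ : i ∈ univ) : μ i * ⟪z i, q - p⟫ ≤ 0 :=
      mul_nonpos_of_nonneg_of_nonpos (hμ i).le (by rw [inner_sub_right]; linarith [hle i])
    exact (mul_eq_zero.1 ((sum_eq_zero_iff_of_nonpos hnonpos).1 hsum i (mem_univ i))).resolve_left
      (hμ i).ne'
  -- All the `z i` are orthogonal to `q - p`, hence equal, and then `∑ μ i • z i = z i₀ ≠ 0`.
  obtain ⟨i₀⟩ : Nonempty ι := by
    by_contra! h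
    simp at hμ1
  have hzi (i) : z i = z i₀ :=
    (hz i).eq_of_inner_eq_zero hgp hn (hz i₀) (sub_ne_zero.2 hq) (hperp i) (hperp i₀)
  simp_rw [hzi, ← sum_smul, hμ1, one_smul] at hμz
  simpa [hμz] using (hz i₀).1

theorem card_erase_le_of_center_eq_singleton (hgp : InGeneralPosition P)
    (hn : 2 * centerpointDepth P < #P) (hC : {c | IsCenterpoint P c} = {p}) :
    #(P.erase p) ≤ 3 * (centerpointDepth P - 1) := by
  have hP : P.Nonempty := card_pos.1 (by omega)
  obtain ⟨ι, _, z, μ, hzT, hz, hμ, hμ1, hμz⟩ :=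
    eq_pos_convex_span_of_mem_convexHull (zero_mem_convexHull_setOf_isTightDirection hP hC)
  have hzt (i) : IsTightDirection P p (z i) := hzT (Set.mem_range_self i)
  have hcover : P.erase p ⊆ univ.biUnion fun i => {q ∈ P | ⟪z i, p⟫ < ⟪z i, q⟫} := by
    intro q hq
    obtain ⟨hqp, hqP⟩ := mem_erase.1 hq
    obtain ⟨i, hi⟩ := exists_inner_lt_of_sum_smul_eq_zero hgp hn hzt hμ hμ1 hμz hqp
    exact mem_biUnion.2 ⟨i, mem_univ _, mem_filter.2 ⟨hqP, hi⟩⟩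
  calc #(P.erase p) ≤ ∑ i, #{q ∈ P | ⟪z i, p⟫ < ⟪z i, q⟫} :=
        (card_le_card hcover).trans card_biUnion_le
    _ ≤ ∑ _i : ι, (centerpointDepth P - 1) :=
        sum_le_sum fun i _ => Nat.le_sub_one_of_lt ((hzt i).card_filter_lt hP)
    _ = Fintype.card ι * (centerpointDepth P - 1) := by simp
    _ ≤ 3 * (centerpointDepth P - 1) := by
        gcongr
        simpa [finrank_euclideanSpace_fin] using hz.card_le_finrank_add_one

end PlaneCenter

/-- the center of a set of `n ≥ 6` points in the plane in general position
has dimension `0` or `2`; if it is `0`-dimensional it is a single point of `P`,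
and `n = 3k + 1` for some `k ≥ 2`. -/
theorem center_dimension_plane
    (P : Finset (EuclideanSpace ℝ (Fin 2))) (n : ℕ) (hn : P.card = n) (h6 : 6 ≤ n)
    (hgp : ∀ p ∈ P, ∀ q ∈ P, ∀ r ∈ P, p ≠ q → p ≠ r → q ≠ r →
      AffineIndependent ℝ ![p, q, r])
    (C : Set (EuclideanSpace ℝ (Fin 2))) (hC : C = {c | IsCenterpoint P c}) :
    (setDim C = 0 ∨ setDim C = 2) ∧
    (setDim C = 0 → (∃ p ∈ P, C = {p}) ∧ ∃ k : ℕ, 2 ≤ k ∧ n = 3 * k + 1) := by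
  subst hC hn
  have hP : P.Nonempty := card_pos.1 (by omega)
  have hdepth := mul_centerpointDepth_sub_one_lt hP
  have h2k : 2 * centerpointDepth P < #P := by omega
  obtain ⟨c, hc⟩ := exists_isCenterpoint P
  by_cases hsub : {c | IsCenterpoint P c}.Subsingleton
  · have hCc := hsub.eq_singleton_of_mem hc
    have hcard := card_erase_le_of_center_eq_singleton hgp h2k hCc
    have hcP : c ∈ P := by
      by_contra hcP
      rw [erase_eq_of_notMem hcP] at hcard
      omega
    rw [card_erase_of_mem hcP] at hcard
    refine ⟨.inl (hCc ▸ setDim_singleton c), fun _ => ⟨⟨c, hcP, hCc⟩, ?_⟩⟩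
    exact ⟨centerpointDepth P - 1, by omega, by omega⟩
  · have hcol := not_collinear_setOf_isCenterpoint hgp h2k hsub
    rw [← setDim_le_one_iff_collinear, not_le] at hcol
    have hle := setDim_le {c | IsCenterpoint P c}
    exact ⟨.inr (by omega), by omega⟩
end

section
/- For every integer k with 1 ≤ k ≤ d + 1, if the intersection of k closed halfspaces in ℝ^d is nonempty, then its dimension is at least d − k + 1 (and at most d). -/
open Module

theorem LinearMap.finrank_sub_le_finrank_ker {K V W : Type*} [DivisionRing K]
    [AddCommGroup V] [Module K V] [AddCommGroup W] [Module K W]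
    [FiniteDimensional K V] [FiniteDimensional K W] (g : V →ₗ[K] W) :
    finrank K V - finrank K W ≤ finrank K (LinearMap.ker g) := by
  have := g.finrank_range_add_finrank_ker
  have := (LinearMap.range g).finrank_le
  omega

section Halfspaces

variable {𝕜 V ι : Type*} [Field 𝕜] [LinearOrder 𝕜] [IsStrictOrderedRing 𝕜]
  [AddCommGroup V] [Module 𝕜 V] {f : ι → V →ₗ[𝕜] 𝕜} {a : ι → 𝕜} {x₀ v : V}

theorem mem_direction_affineSpan_iInter_of_forall_nonneg
    (hx₀ : x₀ ∈ ⋂ i, {x | a i ≤ f i x}) (hv : ∀ i, 0 ≤ f i v) :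
    v ∈ (affineSpan 𝕜 (⋂ i, {x | a i ≤ f i x})).direction := by
  have hvx₀ : v + x₀ ∈ ⋂ i, {x | a i ≤ f i x} := by
    simp only [Set.mem_iInter, Set.mem_ofPred_eq, map_add] at hx₀ ⊢
    exact fun i => le_add_of_nonneg_of_le (hv i) (hx₀ i)
  simpa using AffineSubspace.vsub_mem_direction (subset_affineSpan 𝕜 _ hvx₀)
    (subset_affineSpan 𝕜 _ hx₀)

theorem mem_direction_affineSpan_iInter_of_forall_eq {j : ι}
    (hx₀ : x₀ ∈ ⋂ i, {x | a i ≤ f i x}) (hv : ∀ i, f i v = f j v) :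
    v ∈ (affineSpan 𝕜 (⋂ i, {x | a i ≤ f i x})).direction := by
  rcases le_total 0 (f j v) with hpos | hneg
  · exact mem_direction_affineSpan_iInter_of_forall_nonneg hx₀ fun i => (hv i).symm ▸ hpos
  · refine neg_mem_iff.mp (mem_direction_affineSpan_iInter_of_forall_nonneg hx₀ fun i => ?_)
    rw [map_neg, hv i]
    exact neg_nonneg.mpr hneg

theorem ker_pi_sub_le_direction_affineSpan_iInter {m : ℕ} {f : Fin (m + 1) → V →ₗ[𝕜] 𝕜}
    {a : Fin (m + 1) → 𝕜} (hx₀ : x₀ ∈ ⋂ i, {x | a i ≤ f i x}) :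
    LinearMap.ker (LinearMap.pi fun i : Fin m => f i.succ - f 0) ≤
      (affineSpan 𝕜 (⋂ i, {x | a i ≤ f i x})).direction := by
  intro v hv
  refine mem_direction_affineSpan_iInter_of_forall_eq (j := 0) hx₀ fun i => ?_
  refine Fin.cases rfl (fun i => ?_) i
  have := congrFun (LinearMap.mem_ker.mp hv) i
  simpa [sub_eq_zero] using this

end Halfspaces

theorem dim_inter_halfspaces_general
    (d k : ℕ) (hk1 : 1 ≤ k)
    (f : Fin k → (EuclideanSpace ℝ (Fin d) →ₗ[ℝ] ℝ))
    (a : Fin k → ℝ)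
    (S : Set (EuclideanSpace ℝ (Fin d))) (hS : S = ⋂ i, {x | a i ≤ f i x})
    (hne : S.Nonempty) :
    d + 1 - k ≤ setDim S ∧ setDim S ≤ d := by
  obtain ⟨m, rfl⟩ := Nat.exists_eq_add_of_le' hk1
  obtain ⟨x₀, hx₀⟩ := hne
  subst hS
  have hker := (LinearMap.pi fun i : Fin m => f i.succ - f 0).finrank_sub_le_finrank_ker
  have hdir := Submodule.finrank_mono (ker_pi_sub_le_direction_affineSpan_iInter hx₀)
  have hle := (affineSpan ℝ (⋂ i, {x | a i ≤ f i x})).direction.finrank_le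
  simp only [finrank_euclideanSpace_fin, finrank_fin_fun] at hker hle
  unfold setDim
  omega

/-- a nonempty intersection of `k ≤ d + 1` closed halfspaces in `ℝ^d`
has dimension at least `d - k + 1` (and at most `d`). -/
theorem dim_inter_halfspaces
    (d k : ℕ) (hk1 : 1 ≤ k) (hkd : k ≤ d + 1)
    (f : Fin k → (EuclideanSpace ℝ (Fin d) →ₗ[ℝ] ℝ)) (hf : ∀ i, f i ≠ 0)
    (a : Fin k → ℝ)
    (S : Set (EuclideanSpace ℝ (Fin d))) (hS : S = ⋂ i, {x | a i ≤ f i x})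
    (hne : S.Nonempty) :
    d + 1 - k ≤ setDim S ∧ setDim S ≤ d :=
  dim_inter_halfspaces_general d k hk1 f a S hS hne
end

section
/- Let 𝓗 be a finite family of closed halfspaces in ℝ^d whose total intersection C is nonempty. If every subfamily of 𝓗 of at most d + 1 members has a d-dimensional intersection, then C has dimension d. -/
/-- A closed halfspace in `ℝ^d`. -/
def IsClosedHalfspace {d : ℕ} (S : Set (EuclideanSpace ℝ (Fin d))) : Prop :=
  ∃ (f : EuclideanSpace ℝ (Fin d) →ₗ[ℝ] ℝ) (a : ℝ), f ≠ 0 ∧ S = {x | a ≤ f x}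

lemma halfspace_convex {d : ℕ} {S : Set (EuclideanSpace ℝ (Fin d))}
    (h : IsClosedHalfspace S) : Convex ℝ S := by
  obtain ⟨f, a, -, rfl⟩ := h
  exact convex_halfSpace_ge (LinearMap.isLinear f) a

lemma setDim_eq_top {d : ℕ} {S : Set (EuclideanSpace ℝ (Fin d))}
    (hne : S.Nonempty) (h : setDim S = d) : affineSpan ℝ S = ⊤ := by
  have hdir : (affineSpan ℝ S).direction = ⊤ := by
    apply Submodule.eq_top_of_finrank_eq
    rw [finrank_euclideanSpace_fin]
    exact h
  rw [← AffineSubspace.direction_eq_top_iff_of_nonempty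
    ⟨hne.some, subset_affineSpan ℝ S hne.some_mem⟩]
  exact hdir

/-- if every subfamily of at most `d + 1` closed halfspaces from a finite
family `𝓗` (with nonempty total intersection) has a `d`-dimensional intersection,
then the total intersection has dimension `d`. -/
theorem dim_inter_family_halfspaces
    (d : ℕ) (𝓗 : Finset (Set (EuclideanSpace ℝ (Fin d))))
    (hhs : ∀ S ∈ 𝓗, IsClosedHalfspace S)
    (C : Set (EuclideanSpace ℝ (Fin d)))
    (hC : C = ⋂₀ (𝓗 : Set (Set (EuclideanSpace ℝ (Fin d)))))
    (hCne : C.Nonempty)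
    (hdim : ∀ G ⊆ 𝓗, G.card ≤ d + 1 →
      setDim (⋂₀ (G : Set (Set (EuclideanSpace ℝ (Fin d))))) = d) :
    setDim C = d := by
  classical
  have hfr : Module.finrank ℝ (EuclideanSpace ℝ (Fin d)) = d := finrank_euclideanSpace_fin
  -- Every subfamily of ≤ d+1 open halfspaces (interiors) has nonempty intersection
  have key : (⋂ S ∈ 𝓗, interior S).Nonempty := by
    apply Convex.helly_theorem' (𝕜 := ℝ)
    · intro S hS
      exact (halfspace_convex (hhs S hS)).interior
    · intro G hG hGcard
      rw [hfr] at hGcard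
      have hconv : Convex ℝ (⋂₀ (G : Set (Set (EuclideanSpace ℝ (Fin d))))) :=
        convex_sInter fun S hS => halfspace_convex (hhs S (hG hS))
      have hne : (⋂₀ (G : Set (Set (EuclideanSpace ℝ (Fin d))))).Nonempty := by
        obtain ⟨x, hx⟩ := hCne
        exact ⟨x, fun S hS => (hC ▸ hx) S (hG hS)⟩
      have hspan := setDim_eq_top hne (hdim G hG hGcard)
      obtain ⟨x, hx⟩ := (hconv.interior_nonempty_iff_affineSpan_eq_top).mpr hspan
      refine ⟨x, Set.mem_biInter fun S hS => ?_⟩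
      exact interior_mono (Set.sInter_subset_of_mem hS) hx
  obtain ⟨x, hx⟩ := key
  -- The set ⋂ S ∈ 𝓗, interior S is an open subset of C containing x
  have hopen : IsOpen (⋂ S ∈ 𝓗, interior S) :=
    isOpen_biInter_finset fun S _ => isOpen_interior
  have hsub : (⋂ S ∈ 𝓗, interior S) ⊆ C := by
    intro y hy
    rw [hC]
    exact fun S hS => interior_subset (Set.mem_iInter₂.mp hy S hS)
  have : affineSpan ℝ C = ⊤ := by
    have h1 : affineSpan ℝ (⋂ S ∈ 𝓗, interior S) = ⊤ :=
      hopen.affineSpan_eq_top ⟨x, hx⟩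
    exact top_le_iff.mp (h1 ▸ affineSpan_mono ℝ hsub)
  rw [setDim, this, AffineSubspace.direction_top, finrank_top, hfr]
end

section
/- Let 𝓗 be a finite family of closed halfspaces in ℝ^d whose total intersection is nonempty, let s be an integer with 1 ≤ s ≤ d, and suppose that every intersection of s members of 𝓗 has dimension d. Then for every subfamily of s + 1 members of 𝓗, the dimension of its intersection is either d or exactly d − s. -/
/-!
If the intersection `K` of the `s + 1` halfspaces `a i ≤ f i x` has empty interior, every
defining inequality is an equality on `K`: dropping halfspace `j` leaves a convex set with
interior, and this interior is dense in it, so a point of `K` where `f j` is slack would be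
approximated by interior points of `K`. Hence `K` is a translate of the kernel of
`L = (f i)ᵢ : ℝ^d → ℝ^(s+1)` and `dim K = d - rank L`. Positive vectors in the range of `L`
would give interior points of `K`, so the range is proper, while every `s` coordinates are
simultaneously positive on it; Helly's theorem in the range then forces `rank L = s`.
-/

open Module Finset

theorem Submodule.exists_forall_pos_of_finrank_lt {ι : Type*} [Fintype ι]
    (V : Submodule ℝ (ι → ℝ)) {k : ℕ} (hk : finrank ℝ V < k) (hkι : k ≤ Fintype.card ι)
    (h : ∀ J : Finset ι, #J = k → ∃ y ∈ V, ∀ i ∈ J, 0 < y i) : ∃ y ∈ V, ∀ i, 0 < y i := by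
  obtain ⟨y, hy⟩ : (⋂ i ∈ (univ : Finset ι), {y : V | 0 < (y : ι → ℝ) i}).Nonempty := by
    refine Convex.helly_theorem'
      (fun i _ => (convex_Ioi 0).linear_preimage ((LinearMap.proj i).comp V.subtype))
      fun I _ hI => ?_
    obtain ⟨J, hIJ, -, hJ⟩ := exists_subsuperset_card_eq (n := k) (subset_univ I) (by omega)
      (by simpa using hkι)
    obtain ⟨y, hyV, hy⟩ := h J hJ
    exact ⟨⟨y, hyV⟩, Set.mem_iInter₂.2 fun i hi => hy i (hIJ hi)⟩
  exact ⟨y, y.2, fun i => Set.mem_iInter₂.1 hy i (mem_univ i)⟩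

theorem Submodule.finrank_eq_of_not_exists_pos {ι : Type*} [Fintype ι] {s : ℕ}
    (hcard : Fintype.card ι = s + 1) (V : Submodule ℝ (ι → ℝ)) (hpos : ¬ ∃ y ∈ V, ∀ i, 0 < y i)
    (hfacet : ∀ J : Finset ι, #J = s → ∃ y ∈ V, ∀ i ∈ J, 0 < y i) : finrank ℝ V = s := by
  have hle : finrank ℝ V < s + 1 := by
    have hV : V ≠ ⊤ := fun htop => hpos ⟨fun _ => 1, htop ▸ Submodule.mem_top, fun _ => one_pos⟩
    simpa [hcard] using Submodule.finrank_lt hV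
  have hge : s ≤ finrank ℝ V :=
    not_lt.1 fun hlt => hpos (V.exists_forall_pos_of_finrank_lt hlt (by omega) hfacet)
  omega

theorem LinearMap.direction_affineSpan_preimage_singleton {R M N : Type*} [Ring R]
    [AddCommGroup M] [Module R M] [AddCommGroup N] [Module R N] (L : M →ₗ[R] N) (x₀ : M) :
    (affineSpan R (L ⁻¹' {L x₀})).direction = LinearMap.ker L := by
  have : L ⁻¹' {L x₀} = AffineSubspace.mk' x₀ (LinearMap.ker L) := by
    ext x
    simp [AffineSubspace.mem_mk', sub_eq_zero]
  rw [this, AffineSubspace.affineSpan_coe, AffineSubspace.direction_mk']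

section Polyhedron

variable {E ι : Type*} [AddCommGroup E] [Module ℝ E]

def polyhedron (f : ι → E →ₗ[ℝ] ℝ) (a : ι → ℝ) (J : Finset ι) : Set E :=
  ⋂ i ∈ J, {x | a i ≤ f i x}

variable {f : ι → E →ₗ[ℝ] ℝ} {a : ι → ℝ}

theorem mem_polyhedron {J : Finset ι} {x : E} : x ∈ polyhedron f a J ↔ ∀ i ∈ J, a i ≤ f i x :=
  Set.mem_iInter₂

theorem convex_polyhedron (J : Finset ι) : Convex ℝ (polyhedron f a J) :=
  convex_iInter₂ fun i _ => (convex_Ici (a i)).linear_preimage (f i)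

theorem polyhedron_mono {J J' : Finset ι} (h : J ⊆ J') : polyhedron f a J' ⊆ polyhedron f a J :=
  Set.biInter_subset_biInter_left h

variable [TopologicalSpace E] [IsTopologicalAddGroup E] [ContinuousSMul ℝ E] [T2Space E]
  [FiniteDimensional ℝ E]

theorem interior_setOf_le_linearMap {g : E →ₗ[ℝ] ℝ} (hg : g ≠ 0) (b : ℝ) :
    interior {x | b ≤ g x} = {x | b < g x} := by
  have := (g.isOpenMap_of_finiteDimensional (LinearMap.surjective_of_ne_zero hg)
    ).preimage_interior_eq_interior_preimage g.continuous_of_finiteDimensional (Set.Ici b)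
  rwa [interior_Ici, eq_comm] at this

theorem interior_polyhedron {J : Finset ι} (hf : ∀ i ∈ J, f i ≠ 0) :
    interior (polyhedron f a J) = {x | ∀ i ∈ J, a i < f i x} := by
  rw [polyhedron, J.interior_iInter]
  ext x
  simp +contextual [interior_setOf_le_linearMap, hf]

theorem apply_eq_of_mem_polyhedron_of_not_nonempty_interior [DecidableEq ι] {J : Finset ι}
    (hf : ∀ i ∈ J, f i ≠ 0) {j : ι} (hj : j ∈ J)
    (hfacet : (interior (polyhedron f a (J.erase j))).Nonempty)
    (hint : ¬ (interior (polyhedron f a J)).Nonempty) {x : E} (hx : x ∈ polyhedron f a J) :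
    f j x = a j := by
  refine le_antisymm (not_lt.1 fun hlt => hint ?_) (mem_polyhedron.1 hx j hj)
  have hx' : x ∈ closure (interior (polyhedron f a (J.erase j))) := by
    rw [(convex_polyhedron _).closure_interior_eq_closure_of_nonempty_interior hfacet]
    exact subset_closure (polyhedron_mono (erase_subset j J) hx)
  obtain ⟨y, hyj, hy⟩ := mem_closure_iff.1 hx' {z | a j < f j z}
    (isOpen_lt continuous_const (f j).continuous_of_finiteDimensional) hlt
  rw [interior_polyhedron fun i hi => hf i (mem_of_mem_erase hi)] at hy
  refine ⟨y, (interior_polyhedron hf).symm ▸ fun i hi => ?_⟩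
  obtain rfl | hij := eq_or_ne i j
  · exact hyj
  · exact hy i (mem_erase.2 ⟨hij, hi⟩)

theorem interior_polyhedron_nonempty_or_finrank_add_eq [Fintype ι] [DecidableEq ι] {s : ℕ}
    (hcard : Fintype.card ι = s + 1) (hf : ∀ i, f i ≠ 0) (hne : (polyhedron f a univ).Nonempty)
    (hfacet : ∀ J : Finset ι, #J = s → (interior (polyhedron f a J)).Nonempty) :
    (interior (polyhedron f a univ)).Nonempty ∨
      finrank ℝ (affineSpan ℝ (polyhedron f a univ)).direction + s = finrank ℝ E := by
  refine or_iff_not_imp_left.2 fun hint => ?_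
  obtain ⟨x₀, hx₀⟩ := hne
  have htight : ∀ x ∈ polyhedron f a univ, ∀ i, f i x = a i := fun x hx i =>
    apply_eq_of_mem_polyhedron_of_not_nonempty_interior (fun i _ => hf i) (mem_univ i)
      (hfacet _ (by rw [card_erase_of_mem (mem_univ i), card_univ, hcard]; rfl)) hint hx
  set L := LinearMap.pi f
  have hshift (J : Finset ι) (u : E) :
      x₀ + u ∈ interior (polyhedron f a J) ↔ ∀ i ∈ J, 0 < L u i := by
    simp [interior_polyhedron fun i _ => hf i, htight x₀ hx₀, L]
  have hrank : finrank ℝ (LinearMap.range L) = s := by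
    refine (LinearMap.range L).finrank_eq_of_not_exists_pos hcard ?_ fun J hJ => ?_
    · rintro ⟨_, ⟨u, rfl⟩, hu⟩
      exact hint ⟨x₀ + u, (hshift univ u).2 fun i _ => hu i⟩
    · obtain ⟨w, hw⟩ := hfacet J hJ
      rw [← add_sub_cancel x₀ w, hshift] at hw
      exact ⟨L (w - x₀), LinearMap.mem_range_self L _, hw⟩
  have hK : polyhedron f a univ = L ⁻¹' {L x₀} := by
    ext x
    simp only [mem_polyhedron, Set.mem_preimage, Set.mem_singleton_iff, funext_iff, L,
      LinearMap.pi_apply, htight x₀ hx₀]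
    exact ⟨fun hx i => htight x (mem_polyhedron.2 hx) i, fun hx i _ => (hx i).ge⟩
  rw [hK, L.direction_affineSpan_preimage_singleton, ← L.finrank_range_add_finrank_ker, hrank,
    add_comm]

end Polyhedron

theorem Convex.setDim_eq_iff_interior_nonempty {d : ℕ} {S : Set (EuclideanSpace ℝ (Fin d))}
    (hS : Convex ℝ S) (hne : S.Nonempty) : setDim S = d ↔ (interior S).Nonempty := by
  rw [hS.interior_nonempty_iff_affineSpan_eq_top,
    ← AffineSubspace.direction_eq_top_iff_of_nonempty (hne.affineSpan ℝ),
    Submodule.eq_top_iff_finrank_eq,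
    finrank_euclideanSpace_fin, setDim]

theorem dim_inter_succ_halfspaces_general
    (d : ℕ) (𝓗 : Finset (Set (EuclideanSpace ℝ (Fin d))))
    (hhs : ∀ S ∈ 𝓗, IsClosedHalfspace S)
    (hne : (⋂₀ (𝓗 : Set (Set (EuclideanSpace ℝ (Fin d))))).Nonempty)
    (s : ℕ)
    (hdim : ∀ G ⊆ 𝓗, G.card = s →
      setDim (⋂₀ (G : Set (Set (EuclideanSpace ℝ (Fin d))))) = d) :
    ∀ G ⊆ 𝓗, G.card = s + 1 →
      setDim (⋂₀ (G : Set (Set (EuclideanSpace ℝ (Fin d))))) = d ∨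
      setDim (⋂₀ (G : Set (Set (EuclideanSpace ℝ (Fin d))))) = d - s := by
  classical
  intro G hG hcard
  choose f a hf hfa using fun S : G => hhs S (hG S.2)
  have hsInter (J : Finset G) :
      ⋂₀ (J.map (Function.Embedding.subtype _) : Set (Set (EuclideanSpace ℝ (Fin d)))) =
        polyhedron f a J := by
    ext x
    simp [mem_polyhedron, hfa]
  have hsub (J : Finset G) : J.map (Function.Embedding.subtype _) ⊆ 𝓗 := by
    intro S hS
    obtain ⟨T, -, rfl⟩ := mem_map.1 hS
    exact hG T.2
  have hpoly_ne (J : Finset G) : (polyhedron f a J).Nonempty :=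
    hsInter J ▸ hne.mono (Set.sInter_subset_sInter (coe_subset.2 (hsub J)))
  have hpoly (J : Finset G) :
      setDim (polyhedron f a J) = d ↔ (interior (polyhedron f a J)).Nonempty :=
    (convex_polyhedron J).setDim_eq_iff_interior_nonempty (hpoly_ne J)
  rw [← attach_map_val (s := G), hsInter, ← univ_eq_attach]
  rcases interior_polyhedron_nonempty_or_finrank_add_eq (by simpa using hcard) hf (hpoly_ne univ)
    fun J hJ => (hpoly J).1 (hsInter J ▸ hdim _ (hsub J) (by simpa using hJ)) with h | h
  · exact Or.inl ((hpoly univ).2 h)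
  · rw [finrank_euclideanSpace_fin] at h
    rw [setDim]
    omega

/-- if every intersection of `s` members of a finite family `𝓗` of closed
halfspaces in `ℝ^d` (with nonempty total intersection) has dimension `d`, then every
intersection of `s + 1` members has dimension `d` or exactly `d - s`. -/
theorem dim_inter_succ_halfspaces
    (d : ℕ) (𝓗 : Finset (Set (EuclideanSpace ℝ (Fin d))))
    (hhs : ∀ S ∈ 𝓗, IsClosedHalfspace S)
    (hne : (⋂₀ (𝓗 : Set (Set (EuclideanSpace ℝ (Fin d))))).Nonempty)
    (s : ℕ) (hs1 : 1 ≤ s) (hsd : s ≤ d)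
    (hdim : ∀ G ⊆ 𝓗, G.card = s →
      setDim (⋂₀ (G : Set (Set (EuclideanSpace ℝ (Fin d))))) = d) :
    ∀ G ⊆ 𝓗, G.card = s + 1 →
      setDim (⋂₀ (G : Set (Set (EuclideanSpace ℝ (Fin d))))) = d ∨
      setDim (⋂₀ (G : Set (Set (EuclideanSpace ℝ (Fin d))))) = d - s :=
  dim_inter_succ_halfspaces_general d 𝓗 hhs hne s hdim
end

section
/- Let k ≥ 1 and n = 3k, and work in ZMod n. For each i, let T_i be the set of unordered pairs {{i, i+t} : 1 ≤ t ≤ k} ∪ {{i+k, i+k+t} : 1 ≤ t ≤ k} ∪ {{i+2k, i+2k+t} : 1 ≤ t ≤ k−1}, with all arithmetic modulo n. Then for all distinct i, j ∈ {0, 1, …, k−1}, the edge sets T_i and T_j are disjoint, and each T_i is the edge set of a spanning tree of the complete graph on ZMod n (it has n − 1 edges and the corresponding graph is connected and acyclic). -/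
/-!
Writing vertices as offsets `i + u` with `0 ≤ u < 3k`, the edge set `T i` consists of one edge
`{i + p u, i + u}` for each offset `0 < u < 3k`, where the parent `p u = k ⌊(u - 1) / k⌋` is the
left end of the block `(mk, (m + 1)k]` containing `u`. Since `p u < u`, every offset is joined
to `i` by descending through parents, so `T i` is connected with `3k - 1` edges on `3k`
vertices: a spanning tree. Two trees `T i`, `T j` with `i, j < k` cannot share an edge:
matching the parents forces `i ≡ j (mod k)`, while matching crosswise forces the two gaps
`u - p u ∈ [1, k]` to add up to a multiple of `3k`.
-/

open SimpleGraph

lemma ZMod.natCast_injOn_Iio (n : ℕ) : Set.InjOn (Nat.cast : ℕ → ZMod n) (Set.Iio n) :=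
  fun a ha b hb h => by
    simpa [ZMod.val_natCast_of_lt ha, ZMod.val_natCast_of_lt hb] using congrArg ZMod.val h

section ParentEdges

variable {n : ℕ}

def parentEdges (p : ℕ → ℕ) (i : ZMod n) : Set (Sym2 (ZMod n)) :=
  (fun u : ℕ => s(i + p u, i + u)) '' Set.Ioo 0 n

variable {p : ℕ → ℕ} (hp : ∀ u, 0 < u → p u < u) (i : ZMod n)
include hp

lemma add_parent_ne {u : ℕ} (hu : u ∈ Set.Ioo 0 n) : i + (p u : ZMod n) ≠ i + u := fun h =>
  (hp u hu.1).ne <| ZMod.natCast_injOn_Iio n ((hp u hu.1).trans hu.2) hu.2 (add_left_cancel h)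

lemma injOn_parentEdge : Set.InjOn (fun u : ℕ => s(i + p u, i + (u : ZMod n))) (Set.Ioo 0 n) := by
  intro a ha b hb hab
  have cast_inj := ZMod.natCast_injOn_Iio n
  rcases Sym2.eq_iff.mp hab with ⟨-, h⟩ | ⟨h₁, h₂⟩
  · exact cast_inj ha.2 hb.2 (add_left_cancel h)
  · have hpa := hp a ha.1
    have hpb := hp b hb.1
    have : p a = b := cast_inj (hpa.trans ha.2) hb.2 (add_left_cancel h₁)
    have : a = p b := cast_inj ha.2 (hpb.trans hb.2) (add_left_cancel h₂)
    omega

lemma ncard_parentEdges : (parentEdges p i).ncard = n - 1 := by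
  rw [parentEdges, (injOn_parentEdge hp i).ncard_image, Set.ncard_Ioo_nat, Nat.sub_zero]

lemma edgeSet_fromEdgeSet_parentEdges :
    (fromEdgeSet (parentEdges p i)).edgeSet = parentEdges p i := by
  rw [edgeSet_fromEdgeSet, sdiff_eq_left, Set.disjoint_left]
  rintro _ ⟨u, hu, rfl⟩
  exact (Sym2.mk_isDiag_iff.not.mpr (add_parent_ne hp i hu))

lemma reachable_add_of_lt {u : ℕ} (hu : u < n) :
    (fromEdgeSet (parentEdges p i)).Reachable i (i + u) := by
  induction u using Nat.strong_induction_on with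
  | _ u ih =>
    rcases Nat.eq_zero_or_pos u with rfl | hu₀
    · simp
    · have hadj : (fromEdgeSet (parentEdges p i)).Adj (i + p u) (i + u) :=
        (fromEdgeSet_adj _).mpr
          ⟨⟨u, ⟨hu₀, hu⟩, rfl⟩, add_parent_ne hp i ⟨hu₀, hu⟩⟩
      exact (ih (p u) (hp u hu₀) ((hp u hu₀).trans hu)).trans hadj.reachable

lemma isTree_fromEdgeSet_parentEdges [NeZero n] : (fromEdgeSet (parentEdges p i)).IsTree := by
  have hconn : (fromEdgeSet (parentEdges p i)).Connected := by
    refine (connected_iff_exists_forall_reachable _).mpr ⟨i, fun v => ?_⟩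
    simpa using reachable_add_of_lt hp i (v - i).val_lt
  rw [isTree_iff_connected_and_card, edgeSet_fromEdgeSet_parentEdges hp, Nat.card_coe_set_eq,
    ncard_parentEdges hp, Nat.card_zmod]
  exact ⟨hconn, Nat.sub_add_cancel NeZero.one_le⟩

end ParentEdges

section BlockParent

def blockParent (k u : ℕ) : ℕ := k * ((u - 1) / k)

variable {k : ℕ}

lemma blockParent_lt {u : ℕ} (hu : 0 < u) : blockParent k u < u :=
  (Nat.mul_div_le (u - 1) k).trans_lt (by omega)

lemma blockParent_mul_add {m t : ℕ} (ht : t ∈ Set.Icc 1 k) :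
    blockParent k (k * m + t) = k * m := by
  rw [blockParent, Nat.add_sub_assoc ht.1, Nat.mul_add_div (ht.1.trans ht.2),
    Nat.div_eq_of_lt (Nat.sub_one_lt_of_le ht.1 ht.2), add_zero]

lemma exists_eq_mul_add_of_pos (hk : 0 < k) {u : ℕ} (hu : 0 < u) :
    ∃ m, ∃ t ∈ Set.Icc 1 k, u = k * m + t :=
  ⟨(u - 1) / k, (u - 1) % k + 1, ⟨by omega, Nat.mod_lt _ hk⟩, by
    have := Nat.div_add_mod (u - 1) k; omega⟩

lemma sub_blockParent_le (hk : 0 < k) {u : ℕ} (hu : 0 < u) : u - blockParent k u ≤ k := by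
  obtain ⟨m, t, ht, rfl⟩ := exists_eq_mul_add_of_pos hk hu
  rw [blockParent_mul_add ht, Nat.add_sub_cancel_left]
  exact ht.2

lemma add_blockParent_lt {i u : ℕ} (hi : i < k) (hu : u < 3 * k) :
    i + blockParent k u < 3 * k := by
  have : (u - 1) / k < 3 := (Nat.div_lt_iff_lt_mul (by omega)).mpr (by omega)
  have : k * ((u - 1) / k) ≤ k * 2 := Nat.mul_le_mul_left k (by omega)
  rw [blockParent]
  omega

lemma add_blockParent_mod {i u : ℕ} (hi : i < k) : (i + blockParent k u) % k = i := by
  rw [blockParent, Nat.add_mul_mod_self_left, Nat.mod_eq_of_lt hi]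

end BlockParent

lemma block_union_eq_parentEdges {k : ℕ} (hk : 0 < k) (i : ZMod (3 * k)) :
    {e | ∃ t : ℕ, 1 ≤ t ∧ t ≤ k ∧ e = s(i, i + (t : ZMod (3 * k)))} ∪
      {e | ∃ t : ℕ, 1 ≤ t ∧ t ≤ k ∧
        e = s(i + (k : ZMod (3 * k)), i + (k : ZMod (3 * k)) + (t : ZMod (3 * k)))} ∪
      {e | ∃ t : ℕ, 1 ≤ t ∧ t ≤ k - 1 ∧
        e = s(i + ((2 * k : ℕ) : ZMod (3 * k)),
          i + ((2 * k : ℕ) : ZMod (3 * k)) + (t : ZMod (3 * k)))} =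
      parentEdges (blockParent k) i := by
  ext e
  constructor
  · rintro ((⟨t, ht₁, ht₂, rfl⟩ | ⟨t, ht₁, ht₂, rfl⟩) | ⟨t, ht₁, ht₂, rfl⟩)
    · exact ⟨k * 0 + t, ⟨by omega, by omega⟩,
        by dsimp only; rw [blockParent_mul_add ⟨ht₁, ht₂⟩]; push_cast; ring_nf⟩
    · exact ⟨k * 1 + t, ⟨by omega, by omega⟩,
        by dsimp only; rw [blockParent_mul_add ⟨ht₁, ht₂⟩]; push_cast; ring_nf⟩
    · exact ⟨k * 2 + t, ⟨by omega, by omega⟩,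
        by dsimp only; rw [blockParent_mul_add ⟨ht₁, by omega⟩]; push_cast; ring_nf⟩
  · rintro ⟨u, hu, rfl⟩
    obtain ⟨m, t, ht, rfl⟩ := exists_eq_mul_add_of_pos hk hu.1
    have hm : m < 3 := Nat.lt_of_mul_lt_mul_left (a := k) (by have := hu.2; have := ht.1; omega)
    dsimp only
    rw [blockParent_mul_add ht]
    interval_cases m
    · exact Or.inl (Or.inl ⟨t, ht.1, ht.2, by push_cast; ring_nf⟩)
    · exact Or.inl (Or.inr ⟨t, ht.1, ht.2, by push_cast; ring_nf⟩)
    · exact Or.inr ⟨t, ht.1, by have := hu.2; omega, by push_cast; ring_nf⟩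

lemma disjoint_parentEdges_blockParent {k i j : ℕ} (hi : i < k) (hj : j < k) (hij : i ≠ j) :
    Disjoint (parentEdges (blockParent k) (i : ZMod (3 * k)))
      (parentEdges (blockParent k) (j : ZMod (3 * k))) := by
  rw [Set.disjoint_left]
  rintro _ ⟨u, hu, rfl⟩ ⟨v, hv, heq⟩
  rcases Sym2.eq_iff.mp heq with ⟨h, -⟩ | ⟨h₁, h₂⟩
  · have : j + blockParent k v = i + blockParent k u :=
      ZMod.natCast_injOn_Iio _ (add_blockParent_lt hj hv.2) (add_blockParent_lt hi hu.2)
        (by push_cast; exact h)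
    exact hij <| by
      rw [← add_blockParent_mod (u := u) hi, ← this, add_blockParent_mod (u := v) hj]
  · have hpu := blockParent_lt (k := k) hu.1
    have hpv := blockParent_lt (k := k) hv.1
    have hgaps : ((u - blockParent k u + (v - blockParent k v) : ℕ) : ZMod (3 * k)) = 0 := by
      push_cast [Nat.cast_sub hpu.le, Nat.cast_sub hpv.le]
      linear_combination h₂ - h₁
    have hgap_u := sub_blockParent_le (k := k) (by omega) hu.1
    have hgap_v := sub_blockParent_le (k := k) (by omega) hv.1
    have := Nat.eq_zero_of_dvd_of_lt ((ZMod.natCast_eq_zero_iff _ _).mp hgaps) (by omega)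
    omega

theorem zmod_spanning_tree_packing_general
    (k n : ℕ) (hn : n = 3 * k)
    (T : ZMod n → Set (Sym2 (ZMod n)))
    (hT : ∀ i : ZMod n, T i =
      {e | ∃ t : ℕ, 1 ≤ t ∧ t ≤ k ∧ e = s(i, i + (t : ZMod n))} ∪
      {e | ∃ t : ℕ, 1 ≤ t ∧ t ≤ k ∧ e = s(i + (k : ZMod n), i + (k : ZMod n) + (t : ZMod n))} ∪
      {e | ∃ t : ℕ, 1 ≤ t ∧ t ≤ k - 1 ∧
        e = s(i + ((2 * k : ℕ) : ZMod n), i + ((2 * k : ℕ) : ZMod n) + (t : ZMod n))}) :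
    (∀ i j : ℕ, i < k → j < k → i ≠ j →
      Disjoint (T ((i : ℕ) : ZMod n)) (T ((j : ℕ) : ZMod n))) ∧
    (∀ i : ℕ, i < k →
      (T ((i : ℕ) : ZMod n)).ncard = n - 1 ∧
      (SimpleGraph.fromEdgeSet (T ((i : ℕ) : ZMod n))).Connected ∧
      (SimpleGraph.fromEdgeSet (T ((i : ℕ) : ZMod n))).IsAcyclic) := by
  subst hn
  have hT' : ∀ i : ℕ, i < k → T i = parentEdges (blockParent k) i := fun i hi => by
    rw [hT, block_union_eq_parentEdges (by omega)]
  refine ⟨fun i j hi hj hij => ?_, fun i hi => ?_⟩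
  · rw [hT' i hi, hT' j hj]
    exact disjoint_parentEdges_blockParent hi hj hij
  · have : NeZero (3 * k) := ⟨by omega⟩
    have hp : ∀ u, 0 < u → blockParent k u < u := fun _ => blockParent_lt
    have htree := isTree_fromEdgeSet_parentEdges hp (i : ZMod (3 * k))
    rw [hT' i hi]
    exact ⟨ncard_parentEdges hp _, htree.connected, htree.isAcyclic⟩

/-- in `ZMod n` with `n = 3k`, the edge sets
`T i = {{i, i+t} : 1 ≤ t ≤ k} ∪ {{i+k, i+k+t} : 1 ≤ t ≤ k} ∪ {{i+2k, i+2k+t} : 1 ≤ t ≤ k-1}`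
for `i ∈ {0, …, k-1}` are pairwise disjoint, and each is the edge set of a spanning tree
of the complete graph on `ZMod n`. -/
theorem zmod_spanning_tree_packing
    (k n : ℕ) (hk : 1 ≤ k) (hn : n = 3 * k)
    (T : ZMod n → Set (Sym2 (ZMod n)))
    (hT : ∀ i : ZMod n, T i =
      {e | ∃ t : ℕ, 1 ≤ t ∧ t ≤ k ∧ e = s(i, i + (t : ZMod n))} ∪
      {e | ∃ t : ℕ, 1 ≤ t ∧ t ≤ k ∧ e = s(i + (k : ZMod n), i + (k : ZMod n) + (t : ZMod n))} ∪
      {e | ∃ t : ℕ, 1 ≤ t ∧ t ≤ k - 1 ∧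
        e = s(i + ((2 * k : ℕ) : ZMod n), i + ((2 * k : ℕ) : ZMod n) + (t : ZMod n))}) :
    (∀ i j : ℕ, i < k → j < k → i ≠ j →
      Disjoint (T ((i : ℕ) : ZMod n)) (T ((j : ℕ) : ZMod n))) ∧
    (∀ i : ℕ, i < k →
      (T ((i : ℕ) : ZMod n)).ncard = n - 1 ∧
      (SimpleGraph.fromEdgeSet (T ((i : ℕ) : ZMod n))).Connected ∧
      (SimpleGraph.fromEdgeSet (T ((i : ℕ) : ZMod n))).IsAcyclic) :=
  zmod_spanning_tree_packing_general k n hn T hT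
end
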